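/- Let d ≥ 1 and let μ be a translation invariant probability measure on X with E_μ[η(0)] = ρ < ∞. Suppose μ is stabilizable. Then the expected height is conserved by stabilization: E_μ[η_∞(0)] = ρ, where η_∞ is the (μ-a.s. well-defined) stabilized configuration. -/

import Mathlib

open MeasureTheory Filter Topology
open scoped ENNReal NNReal

/-- Sites of the lattice `ℤ^d`. -/
abbrev Site (d : ℕ) := Fin d → ℤ

/-- Sandpile configurations: `X = ℕ^{ℤ^d}`. -/
abbrev Config (d : ℕ) := Site d → ℕ

/-- Nearest-neighbor adjacency on `ℤ^d` (`ℓ¹`-distance one). -/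
def Adjacent {d : ℕ} (x y : Site d) : Prop :=
  (∑ i, (x i - y i).natAbs) = 1

/-- Sum of the values of `f` over the `2d` nearest neighbors of `y`. -/
def nbrSum {d : ℕ} {M : Type*} [AddCommMonoid M] (f : Site d → M) (y : Site d) : M :=
  ∑ i : Fin d, (f (Function.update y i (y i + 1)) + f (Function.update y i (y i - 1)))

/-- The left limit `T(t-, x, η)` of a (monotone, `ℕ`-valued) toppling function. -/
noncomputable def leftVal {d : ℕ} (T : NNReal → Site d → Config d → ℕ)
    (t : NNReal) (x : Site d) (η : Config d) : ℕ :=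
  sSup ((fun s => T s x η) '' Set.Iio t)

/-- A toppling procedure on `ℤ^d` (Definition 2.1): a measurable map
`T : [0,∞) × ℤ^d × X → ℕ` such that (a) `T(0,x,η) = 0`; (b) `t ↦ T(t,x,η)` is
right-continuous, nondecreasing, with jumps of size at most one; (c) finitely many
jumps in every finite time interval; (d) no infinite backward chain of topplings. -/
structure TopplingProcedure (d : ℕ) where
  T : NNReal → Site d → Config d → ℕ
  measurable : ∀ x : Site d, Measurable fun p : NNReal × Config d => T p.1 x p.2
  init : ∀ (x : Site d) (η : Config d), T 0 x η = 0
  mono : ∀ (x : Site d) (η : Config d), Monotone fun t => T t x η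
  jumpLe : ∀ (x : Site d) (η : Config d) (t : NNReal), T t x η ≤ leftVal T t x η + 1
  rightCont : ∀ (x : Site d) (η : Config d) (t : NNReal),
    ∃ ε : NNReal, 0 < ε ∧ ∀ s, t ≤ s → s < t + ε → T s x η = T t x η
  finJumps : ∀ (x : Site d) (η : Config d) (b : NNReal),
    {t : NNReal | t ≤ b ∧ leftVal T t x η < T t x η}.Finite
  noBackwardChain : ∀ η : Config d, ¬ ∃ (xs : ℕ → Site d) (ts : ℕ → NNReal),
    (∀ i, Adjacent (xs (i + 1)) (xs i)) ∧ StrictAnti ts ∧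
    (∀ i, leftVal T (ts i) (xs i) η < T (ts i) (xs i) η)

namespace TopplingProcedure

variable {d : ℕ}

/-- The configuration `η_t = η − Δ T(t,·,η)` at time `t` (as a `ℤ`-valued function). -/
def configAt (P : TopplingProcedure d) (η : Config d) (t : NNReal) (y : Site d) : ℤ :=
  (η y : ℤ) + nbrSum (fun x => (P.T t x η : ℤ)) y - 2 * d * (P.T t y η : ℤ)

/-- The configuration `η_{t-}` just before time `t`. -/
noncomputable def configLeft (P : TopplingProcedure d) (η : Config d) (t : NNReal)
    (y : Site d) : ℤ :=
  (η y : ℤ) + nbrSum (fun x => (leftVal P.T t x η : ℤ)) y - 2 * d * (leftVal P.T t y η : ℤ)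

/-- Site `x` topples at time `t` if `T(t,x,η) > T(t-,x,η)`. -/
def TopplesAt (P : TopplingProcedure d) (η : Config d) (x : Site d) (t : NNReal) : Prop :=
  leftVal P.T t x η < P.T t x η

/-- A toppling procedure is legal if only unstable sites are toppled:
whenever `x` topples at time `t > 0`, `η_{t-}(x) ≥ 2d`. -/
def Legal (P : TopplingProcedure d) : Prop :=
  ∀ (η : Config d) (t : NNReal) (x : Site d), 0 < t → P.TopplesAt η x t →
    (2 * d : ℤ) ≤ P.configLeft η t x

/-- `T` is finite for `η` if `T(∞,x,η) = sup_t T(t,x,η) < ∞` for every `x`. -/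
def FiniteFor (P : TopplingProcedure d) (η : Config d) : Prop :=
  ∀ x : Site d, BddAbove (Set.range fun t => P.T t x η)

/-- `T(∞,x,η) = sup_{t ≥ 0} T(t,x,η)`. -/
noncomputable def Tinf (P : TopplingProcedure d) (η : Config d) (x : Site d) : ℕ :=
  sSup (Set.range fun t => P.T t x η)

/-- The limit configuration `η_∞ = η − Δ T(∞,·,η)` (as a `ℤ`-valued function). -/
noncomputable def finalConfig (P : TopplingProcedure d) (η : Config d) (y : Site d) : ℤ :=
  (η y : ℤ) + nbrSum (fun x => (P.Tinf η x : ℤ)) y - 2 * d * (P.Tinf η y : ℤ)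

/-- `T` is stabilizing for `η` if it is finite for `η` and the limit configuration
`η_∞` is stable, i.e. takes values in `{0, 1, …, 2d−1}`. -/
def StabilizingFor (P : TopplingProcedure d) (η : Config d) : Prop :=
  P.FiniteFor η ∧ ∀ y : Site d, 0 ≤ P.finalConfig η y ∧ P.finalConfig η y ≤ 2 * d - 1

end TopplingProcedure

/-- A configuration `η` is stabilizable if there exists a stabilizing legal
toppling procedure for `η`. -/
def Stabilizable {d : ℕ} (η : Config d) : Prop :=
  ∃ P : TopplingProcedure d, P.Legal ∧ P.StabilizingFor η

/-- The shift of a configuration by a lattice vector `v`. -/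
def shiftConfig {d : ℕ} (v : Site d) (η : Config d) : Config d := fun x => η (x + v)

/-- A probability measure on `X` is translation invariant if it is invariant
under all shifts of `ℤ^d`. -/
def TransInvariant {d : ℕ} (μ : Measure (Config d)) : Prop :=
  ∀ v : Site d, Measure.map (shiftConfig v) μ = μ

/-- `μ` is a product measure: under `μ` the coordinates `(η(x))` are i.i.d. -/
def IsProductMeasure {d : ℕ} (μ : Measure (Config d)) : Prop :=
  ProbabilityTheory.iIndepFun
      (fun (x : Site d) (η : Config d) => η x) μ ∧
    ∀ x : Site d, Measure.map (fun η : Config d => η x) μ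
      = Measure.map (fun η : Config d => η (0 : Site d)) μ

/-- `x` belongs to the set `T_∞` of sites that topple during stabilization of `η`. -/
def ToppledInf {d : ℕ} (η : Config d) (x : Site d) : Prop :=
  ∃ P : TopplingProcedure d, P.Legal ∧ P.StabilizingFor η ∧ 0 < P.Tinf η x

/-- `x` belongs to `W_∞ = T_∞ ∪ {x : η_∞(x) > 0}`: `x` topples during stabilization
of `η`, or is nonempty after stabilization. -/
def InWinf {d : ℕ} (η : Config d) (x : Site d) : Prop :=
  ∃ P : TopplingProcedure d, P.Legal ∧ P.StabilizingFor η ∧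
    (0 < P.Tinf η x ∨ 0 < P.finalConfig η x)

/-- `y` lies in the cluster of `x` of the set `S`: `x` and `y` are joined by a
nearest-neighbor path inside `S`. -/
def InClusterOf {d : ℕ} (S : Site d → Prop) (x y : Site d) : Prop :=
  ∃ (k : ℕ) (f : ℕ → Site d), f 0 = x ∧ f k = y ∧ (∀ i ≤ k, S (f i)) ∧
    ∀ i < k, Adjacent (f i) (f (i + 1))

/-!
The stabilization of `η` is the limit of its stabilizations in the boxes `[-n, n]^d`: by the least
action principle (a legal procedure never topples a site more often than any `w` with `η - Δ w`
stable) the finite-volume odometers increase to the odometer `u = T(∞,·,η)`. At the origin,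
conservation of grains reads `η(0) + Σ_{y ~ 0} u(y) = η_∞(0) + 2d u(0)`.

For `ρ ≤ E[η_∞(0)]`, truncate `u` at a level `M`: the expected mass moved by `min(u, M)` is finite
and, by translation invariance, is received as much as it is sent, so it cancels; let `M → ∞`.
For `E[η_∞(0)] ≤ ρ`, stabilization inside a box never increases the number of grains in it, and
at sites far from the boundary of the box it agrees with `η_∞` with high probability; average
over the box.
-/

section Sandpile

variable {d : ℕ}

section Neighbours

def closedNbhd (y : Site d) : Finset (Site d) :=
  insert y (Finset.univ.biUnion fun i =>
    {Function.update y i (y i + 1), Function.update y i (y i - 1)})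

theorem mem_closedNbhd_self (y : Site d) : y ∈ closedNbhd y := Finset.mem_insert_self _ _

theorem update_mem_closedNbhd (y : Site d) (i : Fin d) :
    Function.update y i (y i + 1) ∈ closedNbhd y ∧ Function.update y i (y i - 1) ∈ closedNbhd y :=
  ⟨Finset.mem_insert_of_mem (Finset.mem_biUnion.2 ⟨i, Finset.mem_univ _, by simp⟩),
    Finset.mem_insert_of_mem (Finset.mem_biUnion.2 ⟨i, Finset.mem_univ _, by simp⟩)⟩

theorem adjacent_update (y : Site d) (i : Fin d) {s : ℤ} (hs : s.natAbs = 1) :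
    Adjacent (Function.update y i (y i + s)) y := by
  unfold Adjacent
  rw [Finset.sum_eq_single i (fun j _ hji => by simp [Function.update_of_ne hji]) (by simp)]
  simpa using hs

theorem adjacent_of_mem_closedNbhd {y z : Site d} (hz : z ∈ closedNbhd y) (hne : z ≠ y) :
    Adjacent z y := by
  obtain ⟨i, -, hi⟩ := Finset.mem_biUnion.1 ((Finset.mem_insert.1 hz).resolve_left hne)
  rcases Finset.mem_insert.1 hi with rfl | hi
  · exact adjacent_update y i (s := 1) rfl
  · rw [Finset.mem_singleton.1 hi, sub_eq_add_neg]
    exact adjacent_update y i (s := -1) rfl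

theorem nbrSum_congr {M : Type*} [AddCommMonoid M] {f g : Site d → M} {y : Site d}
    (h : ∀ z ∈ closedNbhd y, f z = g z) : nbrSum f y = nbrSum g y :=
  Finset.sum_congr rfl fun i _ => by
    rw [h _ (update_mem_closedNbhd y i).1, h _ (update_mem_closedNbhd y i).2]

theorem nbrSum_le_nbrSum {M : Type*} [AddCommMonoid M] [PartialOrder M] [IsOrderedAddMonoid M]
    {f g : Site d → M} {y : Site d} (h : ∀ z ∈ closedNbhd y, f z ≤ g z) :
    nbrSum f y ≤ nbrSum g y :=
  Finset.sum_le_sum fun i _ =>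
    add_le_add (h _ (update_mem_closedNbhd y i).1) (h _ (update_mem_closedNbhd y i).2)

theorem nbrSum_add {M : Type*} [AddCommMonoid M] (f g : Site d → M) (y : Site d) :
    nbrSum (f + g) y = nbrSum f y + nbrSum g y := by
  simp only [nbrSum, Pi.add_apply, ← Finset.sum_add_distrib, add_add_add_comm]

theorem map_nbrSum {M N : Type*} [AddCommMonoid M] [AddCommMonoid N] (φ : M →+ N)
    (f : Site d → M) (y : Site d) : φ (nbrSum f y) = nbrSum (φ ∘ f) y := by
  simp [nbrSum]

theorem nbrSum_const {R : Type*} [NonAssocSemiring R] (c : R) (y : Site d) :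
    nbrSum (fun _ => c) y = 2 * d * c := by
  simp [nbrSum, two_mul, add_mul]

theorem update_eq_add_single (y : Site d) (i : Fin d) (s : ℤ) :
    Function.update y i (y i + s) = y + Pi.single i s := by
  ext j
  rcases eq_or_ne j i with rfl | hj
  · simp
  · simp [Function.update_of_ne hj, Pi.single_eq_of_ne hj]

theorem sum_comp_add_le (u : Site d → ℕ) {V : Finset (Site d)} (hu : ∀ x ∉ V, u x = 0)
    (v : Site d) : ∑ y ∈ V, u (y + v) ≤ ∑ y ∈ V, u y := by
  rw [← Finset.sum_image (g := (· + v)) (fun a _ b _ h => add_right_cancel h)]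
  refine (Finset.sum_subset Finset.inter_subset_left fun x hx hx' => hu x fun hxV => hx' ?_).ge
    |>.trans (Finset.sum_le_sum_of_subset Finset.inter_subset_right)
  exact Finset.mem_inter.2 ⟨hx, hxV⟩

theorem sum_nbrSum_le (u : Site d → ℕ) {V : Finset (Site d)} (hu : ∀ x ∉ V, u x = 0) :
    ∑ y ∈ V, nbrSum u y ≤ 2 * d * ∑ y ∈ V, u y := by
  have hsub : ∀ (y : Site d) i, Function.update y i (y i - 1) = y + Pi.single i (-1) :=
    fun y i => by rw [sub_eq_add_neg, update_eq_add_single]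
  simp only [nbrSum, update_eq_add_single, hsub]
  rw [Finset.sum_comm]
  calc ∑ i : Fin d, ∑ y ∈ V, (u (y + Pi.single i 1) + u (y + Pi.single i (-1)))
      ≤ ∑ _i : Fin d, (∑ y ∈ V, u y + ∑ y ∈ V, u y) :=
        Finset.sum_le_sum fun i _ => Finset.sum_add_distrib.trans_le
          (add_le_add (sum_comp_add_le u hu _) (sum_comp_add_le u hu _))
    _ = 2 * d * ∑ y ∈ V, u y := by
        rw [Finset.sum_const, Finset.card_univ, Fintype.card_fin, smul_eq_mul]
        ring

end Neighbours

section Height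

/-- `TopplingProcedure.configLeft` and `TopplingProcedure.finalConfig` are instances of
`η - Δ u`. -/
def heightAfter (η : Config d) (u : Site d → ℕ) (y : Site d) : ℤ :=
  (η y : ℤ) + nbrSum (fun x => (u x : ℤ)) y - 2 * d * (u y : ℤ)

theorem heightAfter_add (η : Config d) (u δ : Site d → ℕ) (y : Site d) :
    heightAfter η (u + δ) y = heightAfter η u y + nbrSum (fun x => (δ x : ℤ)) y - 2 * d * δ y := by
  have h := nbrSum_add (fun x => (u x : ℤ)) (fun x => (δ x : ℤ)) y
  simp only [heightAfter, Pi.add_apply, Nat.cast_add] at h ⊢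
  rw [show (fun x => (u x : ℤ) + δ x) = (fun x => (u x : ℤ)) + fun x => (δ x : ℤ) from rfl, h]
  ring

theorem heightAfter_congr (η : Config d) {u u' : Site d → ℕ} {y : Site d}
    (h : ∀ z ∈ closedNbhd y, u z = u' z) : heightAfter η u y = heightAfter η u' y := by
  unfold heightAfter
  rw [nbrSum_congr fun z hz => congrArg Nat.cast (h z hz), h y (mem_closedNbhd_self y)]

theorem heightAfter_le_heightAfter (η : Config d) {u w : Site d → ℕ} {y : Site d}
    (hle : ∀ z ∈ closedNbhd y, u z ≤ w z) (heq : u y = w y) :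
    heightAfter η u y ≤ heightAfter η w y := by
  have := nbrSum_le_nbrSum (f := fun x => (u x : ℤ)) (g := fun x => (w x : ℤ))
    fun z hz => Nat.cast_le.2 (hle z hz)
  unfold heightAfter
  rw [heq]
  linarith

theorem add_nbrSum_eq_toNat_heightAfter_add (η : Config d) (u : Site d → ℕ) {y : Site d}
    (h : 0 ≤ heightAfter η u y) :
    η y + nbrSum u y = (heightAfter η u y).toNat + 2 * d * u y := by
  have := map_nbrSum (Nat.castAddMonoidHom ℤ) u y
  simp only [Nat.coe_castAddMonoidHom] at this
  zify
  rw [Int.toNat_of_nonneg h, this]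
  unfold heightAfter
  simp only [Function.comp_def]
  ring

end Height

section LeastAction

theorem leftVal_le {T : NNReal → Site d → Config d → ℕ} {t : NNReal} {x : Site d}
    {η : Config d} {m : ℕ} (h : ∀ s < t, T s x η ≤ m) : leftVal T t x η ≤ m :=
  csSup_le' fun _ ⟨s, hs, hsm⟩ => hsm ▸ h s hs

theorem exists_lt_of_lt_leftVal {T : NNReal → Site d → Config d → ℕ} {t : NNReal} {x : Site d}
    {η : Config d} {m : ℕ} (h : m < leftVal T t x η) : ∃ s < t, m < T s x η := by
  obtain ⟨_, ⟨s, hs, rfl⟩, hm⟩ := exists_lt_of_lt_csSup' h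
  exact ⟨s, hs, hm⟩

namespace TopplingProcedure

variable {P : TopplingProcedure d} {η : Config d} {w : Site d → ℕ}

/-- At the first time `c` at which `x` has toppled more than `w x` times, `x` topples; it can
only be unstable then if a neighbour has already toppled more than `w` times. -/
theorem exists_adjacent_exceeds_before (hP : P.Legal)
    (hw : ∀ z, heightAfter η w z < 2 * d) {x : Site d} {t : NNReal} (h : w x < P.T t x η) :
    ∃ c ≤ t, P.TopplesAt η x c ∧ ∃ x', Adjacent x' x ∧ ∃ s < c, w x' < P.T s x' η := by
  set A : Set NNReal := {s | w x < P.T s x η}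
  set c := sInf A
  have hcA : w x < P.T c x η := by
    obtain ⟨ε, hε, hright⟩ := P.rightCont x η c
    obtain ⟨s, hsA, hslt⟩ := exists_lt_of_csInf_lt ⟨t, h⟩ (lt_add_of_pos_right c hε)
    rwa [← hright s (csInf_le (OrderBot.bddBelow A) hsA) hslt]
  have hleft : leftVal P.T c x η ≤ w x :=
    leftVal_le fun s hs => not_lt.1 fun hsA => (csInf_le (OrderBot.bddBelow A) hsA).not_gt hs
  have hc0 : 0 < c := by
    refine pos_iff_ne_zero.2 fun hc => ?_
    rw [hc, P.init] at hcA
    exact Nat.not_lt_zero _ hcA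
  have hjump := P.jumpLe x η c
  have hleft_eq : leftVal P.T c x η = w x := by omega
  have htop : P.TopplesAt η x c := by unfold TopplingProcedure.TopplesAt; omega
  refine ⟨c, csInf_le (OrderBot.bddBelow A) h, htop, ?_⟩
  suffices ∃ x' ∈ closedNbhd x, x' ≠ x ∧ w x' < leftVal P.T c x' η by
    obtain ⟨x', hx', hne, hlt⟩ := this
    obtain ⟨s, hs, hws⟩ := exists_lt_of_lt_leftVal hlt
    exact ⟨x', adjacent_of_mem_closedNbhd hx' hne, s, hs, hws⟩
  by_contra! hcon
  have hle : heightAfter η (fun z => leftVal P.T c z η) x ≤ heightAfter η w x :=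
    heightAfter_le_heightAfter η
      (fun z hz => if hzx : z = x then hzx ▸ hleft else hcon z hz hzx) hleft_eq
  exact ((hP η c x hc0 htop).trans hle).not_gt (hw x)

/-- Least action principle: otherwise, iterating `exists_adjacent_exceeds_before` yields an
infinite backward chain of topplings. -/
theorem Legal.T_le (hP : P.Legal) (hw : ∀ z, heightAfter η w z < 2 * d) (t : NNReal)
    (x : Site d) : P.T t x η ≤ w x := by
  by_contra! hcon
  let D := {p : Site d × NNReal // w p.1 < P.T p.2 p.1 η}
  have step : ∀ p : D, ∃ q : NNReal × D, q.1 ≤ p.1.2 ∧ P.TopplesAt η p.1.1 q.1 ∧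
      Adjacent q.2.1.1 p.1.1 ∧ q.2.1.2 < q.1 := by
    rintro ⟨⟨y, ty⟩, hy⟩
    obtain ⟨c, hct, htop, x', hadj, s, hs, hTs⟩ := exists_adjacent_exceeds_before hP hw hy
    exact ⟨⟨c, ⟨⟨x', s⟩, hTs⟩⟩, hct, htop, hadj, hs⟩
  choose F hF using step
  let seq : ℕ → D := fun n => Nat.rec ⟨⟨x, t⟩, hcon⟩ (fun _ p => (F p).2) n
  refine P.noBackwardChain η ⟨fun n => (seq n).1.1, fun n => (F (seq n)).1,
    fun n => (hF (seq n)).2.2.1, strictAnti_nat_of_succ_lt fun n => ?_,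
    fun n => (hF (seq n)).2.1⟩
  exact (hF (seq (n + 1))).1.trans_lt (hF (seq n)).2.2.2

end TopplingProcedure

end LeastAction

section FiniteVolume

theorem eventually_eq_ciSup_of_monotone {f : ℕ → ℕ} (hf : Monotone f)
    (hb : BddAbove (Set.range f)) : ∀ᶠ n in atTop, f n = ⨆ n, f n := by
  simpa [nhds_discrete, tendsto_pure] using tendsto_atTop_ciSup hf hb

def toppleRound (η : Config d) (V : Finset (Site d)) (u : Site d → ℕ) : Site d → ℕ :=
  fun x => u x + if x ∈ V ∧ 2 * d ≤ heightAfter η u x then 1 else 0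

def toppleRounds (η : Config d) (V : Finset (Site d)) (k : ℕ) : Site d → ℕ :=
  (toppleRound η V)^[k] 0

variable {η : Config d} {V : Finset (Site d)}

theorem toppleRounds_succ (η : Config d) (V : Finset (Site d)) (k : ℕ) :
    toppleRounds η V (k + 1) = toppleRound η V (toppleRounds η V k) :=
  Function.iterate_succ_apply' _ _ _

theorem monotone_toppleRounds (η : Config d) (V : Finset (Site d)) :
    Monotone (toppleRounds η V) :=
  monotone_nat_of_le_succ fun k x => by rw [toppleRounds_succ]; exact Nat.le_add_right _ _

theorem toppleRounds_eq_zero (k : ℕ) {x : Site d} (hx : x ∉ V) : toppleRounds η V k x = 0 := by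
  induction k with
  | zero => rfl
  | succ k ih => simp [toppleRounds_succ, toppleRound, ih, hx]

theorem heightAfter_toppleRounds_nonneg (k : ℕ) (y : Site d) :
    0 ≤ heightAfter η (toppleRounds η V k) y := by
  induction k generalizing y with
  | zero => simp [toppleRounds, heightAfter, nbrSum]
  | succ k ih =>
    set δ : Site d → ℕ :=
      fun x => if x ∈ V ∧ 2 * d ≤ heightAfter η (toppleRounds η V k) x then 1 else 0
    have hδ : toppleRounds η V (k + 1) = toppleRounds η V k + δ := toppleRounds_succ η V k
    have hnbr : (0 : ℤ) ≤ nbrSum (fun x => (δ x : ℤ)) y :=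
      Finset.sum_nonneg fun _ _ => by positivity
    rw [hδ, heightAfter_add]
    by_cases hy : y ∈ V ∧ 2 * d ≤ heightAfter η (toppleRounds η V k) y
    · simp only [δ, if_pos hy, Nat.cast_one]
      linarith [hy.2]
    · simp only [δ, if_neg hy, Nat.cast_zero]
      linarith [ih y]

theorem toppleRounds_le {w : Site d → ℕ} (hw : ∀ x ∈ V, heightAfter η w x < 2 * d) (k : ℕ) :
    toppleRounds η V k ≤ w := by
  induction k with
  | zero => exact fun _ => Nat.zero_le _
  | succ k ih =>
    intro x
    rw [toppleRounds_succ, toppleRound]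
    split_ifs with hx
    · refine Nat.succ_le_of_lt (lt_of_le_of_ne (ih x) fun heq => ?_)
      exact (hx.2.trans (heightAfter_le_heightAfter η (fun z _ => ih z) heq)).not_gt (hw x hx.1)
    · exact ih x

theorem exists_stable_on (hd : 1 ≤ d) (η : Config d) (V : Finset (Site d)) :
    ∃ w : Site d → ℕ, ∀ x ∈ V, heightAfter η w x < 2 * d := by
  let i₀ : Fin d := ⟨0, hd⟩
  let N : ℤ := (V.sup η : ℕ)
  let R : ℤ := (V.sup fun x => (x i₀).natAbs + 1 : ℕ)
  let q : ℤ → ℤ := fun a => N * (R ^ 2 - a ^ 2)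
  -- `q` is concave with second difference `-2N ≤ -2 η x`, which makes `η - Δ w` nonpositive
  refine ⟨fun z => (q (z i₀)).toNat, fun x hx => ?_⟩
  have hR : |x i₀| + 1 ≤ R := by
    have := Finset.le_sup (f := fun x => (x i₀).natAbs + 1) hx
    simp only [R, Int.abs_eq_natAbs]
    exact_mod_cast this
  have hN : (η x : ℤ) ≤ N := Nat.cast_le.2 (Finset.le_sup (f := η) hx)
  have hq : ∀ a, |a - x i₀| ≤ 1 → ((q a).toNat : ℤ) = q a := fun a ha => by
    have haR : |a| ≤ R := by linarith [abs_sub_abs_le_abs_sub a (x i₀)]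
    exact Int.toNat_of_nonneg (mul_nonneg (by positivity)
      (sub_nonneg.2 (sq_le_sq' (abs_le.1 haR).1 (abs_le.1 haR).2)))
  have hterm : ∀ i : Fin d,
      ((q (Function.update x i (x i + 1) i₀)).toNat : ℤ)
        + ((q (Function.update x i (x i - 1) i₀)).toNat : ℤ)
        = 2 * q (x i₀) - if i₀ = i then 2 * N else 0 := by
    intro i
    simp only [Function.update_apply]
    split_ifs with h
    · subst h
      rw [hq _ (by simp), hq _ (by simp)]
      ring
    · rw [hq _ (by simp)]
      ring
  have hx₀ : ((q (x i₀)).toNat : ℤ) = q (x i₀) := hq _ (by simp)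
  have hnbr : nbrSum (fun z => ((q (z i₀)).toNat : ℤ)) x = 2 * d * q (x i₀) - 2 * N := by
    simp only [nbrSum, hterm, Finset.sum_sub_distrib, Finset.sum_const, Finset.card_univ,
      Fintype.card_fin, Finset.sum_ite_eq, Finset.mem_univ, if_true, nsmul_eq_mul]
    ring
  simp only [heightAfter, hnbr, hx₀]
  have : (0 : ℤ) ≤ η x := by positivity
  linarith

noncomputable def odometerIn (η : Config d) (V : Finset (Site d)) (x : Site d) : ℕ :=
  ⨆ k, toppleRounds η V k x

theorem odometerIn_le {w : Site d → ℕ} (hw : ∀ x ∈ V, heightAfter η w x < 2 * d) :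
    odometerIn η V ≤ w :=
  fun x => ciSup_le fun k => toppleRounds_le hw k x

theorem eventually_toppleRounds_eq_odometerIn (hd : 1 ≤ d) (y : Site d) :
    ∀ᶠ k in atTop, ∀ z ∈ closedNbhd y, toppleRounds η V k z = odometerIn η V z := by
  obtain ⟨w, hw⟩ := exists_stable_on hd η V
  refine (eventually_all_finset _).2 fun z _ => eventually_eq_ciSup_of_monotone
    (fun _ _ h => monotone_toppleRounds η V h z) ⟨w z, ?_⟩
  rintro _ ⟨k, rfl⟩
  exact toppleRounds_le hw k z

theorem heightAfter_odometerIn_nonneg (hd : 1 ≤ d) (y : Site d) :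
    0 ≤ heightAfter η (odometerIn η V) y := by
  obtain ⟨k, hk⟩ := (eventually_toppleRounds_eq_odometerIn (V := V) hd y).exists
  rw [← heightAfter_congr η hk]
  exact heightAfter_toppleRounds_nonneg k y

theorem heightAfter_odometerIn_lt (hd : 1 ≤ d) {x : Site d} (hx : x ∈ V) :
    heightAfter η (odometerIn η V) x < 2 * d := by
  obtain ⟨K, hK⟩ := eventually_atTop.1 (eventually_toppleRounds_eq_odometerIn (V := V) hd x)
  have hfix := (hK (K + 1) K.le_succ) x (mem_closedNbhd_self x)
  rw [← (hK K le_rfl) x (mem_closedNbhd_self x), toppleRounds_succ, toppleRound] at hfix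
  rw [← heightAfter_congr η (hK K le_rfl)]
  by_contra! h
  simp [hx, h] at hfix

theorem odometerIn_eq_zero {x : Site d} (hx : x ∉ V) : odometerIn η V x = 0 := by
  simp [odometerIn, toppleRounds_eq_zero _ hx]

theorem odometerIn_mono (hd : 1 ≤ d) {W : Finset (Site d)} (hVW : V ⊆ W) :
    odometerIn η V ≤ odometerIn η W :=
  odometerIn_le fun _ hx => heightAfter_odometerIn_lt hd (hVW hx)

noncomputable def stabilizedIn (η : Config d) (V : Finset (Site d)) (y : Site d) : ℕ :=
  (heightAfter η (odometerIn η V) y).toNat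

theorem sum_stabilizedIn_le (hd : 1 ≤ d) (η : Config d) (V : Finset (Site d)) :
    ∑ y ∈ V, stabilizedIn η V y ≤ ∑ y ∈ V, η y := by
  have hcons : ∑ y ∈ V, (η y + nbrSum (odometerIn η V) y)
      = ∑ y ∈ V, (stabilizedIn η V y + 2 * d * odometerIn η V y) :=
    Finset.sum_congr rfl fun y _ =>
      add_nbrSum_eq_toNat_heightAfter_add η _ (heightAfter_odometerIn_nonneg hd y)
  have hout := sum_nbrSum_le (odometerIn η V) (V := V) fun _ hx => odometerIn_eq_zero hx
  simp only [Finset.sum_add_distrib, ← Finset.mul_sum] at hcons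
  omega

end FiniteVolume

section Translation

def shiftRegion (v : Site d) : Finset (Site d) ≃ Finset (Site d) :=
  (Equiv.addRight v).finsetCongr

theorem mem_shiftRegion {v x : Site d} {V : Finset (Site d)} : x ∈ shiftRegion v V ↔ x - v ∈ V := by
  simp [shiftRegion, Finset.mem_map_equiv, sub_eq_add_neg]

theorem nbrSum_add_right {M : Type*} [AddCommMonoid M] (f : Site d → M) (y v : Site d) :
    nbrSum f (y + v) = nbrSum (fun z => f (z + v)) y := by
  have h : ∀ (y : Site d) i s, Function.update y i (y i + s) = y + Pi.single i s :=
    update_eq_add_single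
  refine Finset.sum_congr rfl fun i _ => ?_
  simp only [sub_eq_add_neg, h, add_right_comm y v]

theorem heightAfter_shiftConfig (η : Config d) (v : Site d) (u : Site d → ℕ) (x : Site d) :
    heightAfter (shiftConfig v η) u x = heightAfter η (fun z => u (z - v)) (x + v) := by
  simp [heightAfter, shiftConfig, nbrSum_add_right]

theorem toppleRounds_shiftConfig (η : Config d) (v : Site d) (V : Finset (Site d)) (k : ℕ)
    (x : Site d) :
    toppleRounds (shiftConfig v η) V k x = toppleRounds η (shiftRegion v V) k (x + v) := by
  induction k generalizing x with
  | zero => rfl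
  | succ k ih =>
    have hk : toppleRounds (shiftConfig v η) V k =
        fun z => toppleRounds η (shiftRegion v V) k (z + v) := funext ih
    simp [toppleRounds_succ, toppleRound, hk, heightAfter_shiftConfig, mem_shiftRegion]

theorem odometerIn_shiftConfig (η : Config d) (v : Site d) (V : Finset (Site d)) (x : Site d) :
    odometerIn (shiftConfig v η) V x = odometerIn η (shiftRegion v V) (x + v) := by
  simp [odometerIn, toppleRounds_shiftConfig]

theorem stabilizedIn_shiftConfig (η : Config d) (v : Site d) (V : Finset (Site d)) (x : Site d) :
    stabilizedIn (shiftConfig v η) V x = stabilizedIn η (shiftRegion v V) (x + v) := by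
  have h : odometerIn (shiftConfig v η) V = fun z => odometerIn η (shiftRegion v V) (z + v) :=
    funext (odometerIn_shiftConfig η v V)
  simp [stabilizedIn, heightAfter_shiftConfig, h]

end Translation

section Measurability

theorem measurable_nbrSum {M : Type*} [AddCommMonoid M] [MeasurableSpace M] [MeasurableAdd₂ M]
    {f : Config d → Site d → M} (hf : ∀ z, Measurable fun η => f η z) (y : Site d) :
    Measurable fun η => nbrSum (f η) y :=
  Finset.measurable_sum _ fun _ _ => (hf _).add (hf _)

theorem measurable_heightAfter {u : Config d → Site d → ℕ} (hu : ∀ z, Measurable fun η => u η z)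
    (y : Site d) : Measurable fun η => heightAfter η (u η) y := by
  have hcast : ∀ z, Measurable fun η : Config d => ((u η z : ℕ) : ℤ) := fun z =>
    measurable_from_top.comp (hu z)
  exact ((measurable_from_top.comp (measurable_pi_apply y)).add
    (measurable_nbrSum hcast y)).sub ((hcast y).const_mul _)

theorem measurable_toppleRounds (V : Finset (Site d)) (k : ℕ) (x : Site d) :
    Measurable fun η => toppleRounds η V k x := by
  induction k generalizing x with
  | zero => exact measurable_const
  | succ k ih =>
    simp only [toppleRounds_succ, toppleRound]
    refine (ih x).add (Measurable.ite ?_ measurable_const measurable_const)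
    exact (MeasurableSet.const _).inter
      (measurableSet_le measurable_const (measurable_heightAfter ih x))

theorem measurable_odometerIn (V : Finset (Site d)) (x : Site d) :
    Measurable fun η => odometerIn η V x :=
  Measurable.iSup fun k => measurable_toppleRounds V k x

theorem measurable_stabilizedIn (V : Finset (Site d)) (y : Site d) :
    Measurable fun η => stabilizedIn η V y :=
  measurable_from_top.comp (measurable_heightAfter (measurable_odometerIn V) y)

theorem measurable_shiftConfig (v : Site d) : Measurable (shiftConfig (d := d) v) :=
  measurable_pi_lambda _ fun x => measurable_pi_apply (x + v)

theorem lintegral_comp_shiftConfig {μ : Measure (Config d)} (hinv : TransInvariant μ) (v : Site d)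
    {f : Config d → ℝ≥0∞} (hf : Measurable f) :
    ∫⁻ η, f (shiftConfig v η) ∂μ = ∫⁻ η, f η ∂μ := by
  rw [← lintegral_map hf (measurable_shiftConfig v), hinv v]

end Measurability

section Boxes

noncomputable def box (d n : ℕ) : Finset (Site d) :=
  Fintype.piFinset fun _ => Finset.Icc (-(n : ℤ)) n

theorem mem_box {n : ℕ} {x : Site d} : x ∈ box d n ↔ ∀ i, (x i).natAbs ≤ n := by
  simp only [box, Fintype.mem_piFinset, Finset.mem_Icc]
  exact forall_congr' fun i => by omega

theorem box_mono : Monotone (box d) :=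
  fun _ _ h _ hx => mem_box.2 fun i => (mem_box.1 hx i).trans h

theorem card_box (d n : ℕ) : (box d n).card = (2 * n + 1) ^ d := by
  simp only [box, Fintype.card_piFinset, Int.card_Icc, Finset.prod_const, Finset.card_univ,
    Fintype.card_fin]
  congr 1
  omega

theorem eventually_mem_box (x : Site d) : ∀ᶠ n in atTop, x ∈ box d n :=
  eventually_atTop.2 ⟨Finset.univ.sup fun i => (x i).natAbs, fun _ hn =>
    mem_box.2 fun i => (Finset.le_sup (f := fun i => (x i).natAbs) (Finset.mem_univ i)).trans hn⟩

theorem shiftRegion_neg_box_subset {k m : ℕ} {y : Site d} (hy : y ∈ box d m) :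
    box d k ⊆ shiftRegion (-y) (box d (m + k)) := fun z hz => by
  rw [mem_shiftRegion, mem_box]
  intro i
  have := mem_box.1 hz i
  have := mem_box.1 hy i
  simp only [Pi.sub_apply, Pi.neg_apply, sub_neg_eq_add]
  omega

end Boxes

section InfiniteVolume

/-- The supremum is over all finite regions rather than boxes so that the odometer is shift
covariant on the nose (`odometer_shiftConfig`). -/
noncomputable def odometer (η : Config d) (x : Site d) : ℝ≥0∞ :=
  ⨆ V : Finset (Site d), (odometerIn η V x : ℝ≥0∞)

theorem odometerIn_le_odometer (η : Config d) (V : Finset (Site d)) (x : Site d) :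
    (odometerIn η V x : ℝ≥0∞) ≤ odometer η x :=
  le_iSup (fun V => (odometerIn η V x : ℝ≥0∞)) V

theorem measurable_odometer (x : Site d) : Measurable fun η : Config d => odometer η x :=
  Measurable.iSup fun V => measurable_from_top.comp (measurable_odometerIn V x)

theorem odometer_shiftConfig (η : Config d) (v x : Site d) :
    odometer (shiftConfig v η) x = odometer η (x + v) := by
  simp only [odometer, odometerIn_shiftConfig]
  exact (shiftRegion v).iSup_comp (g := fun V => (odometerIn η V (x + v) : ℝ≥0∞))

namespace TopplingProcedure

variable {P : TopplingProcedure d} {η : Config d}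

theorem StabilizingFor.finalConfig_lt (hstab : P.StabilizingFor η) (y : Site d) :
    P.finalConfig η y < 2 * d := by
  linarith [(hstab.2 y).2]

theorem odometerIn_le_Tinf (hstable : ∀ y, P.finalConfig η y < 2 * d) (V : Finset (Site d)) :
    odometerIn η V ≤ P.Tinf η :=
  odometerIn_le fun x _ => hstable x

/-- The finite-volume odometers of growing boxes reach `T(∞,·,η)`: their limit `L` is a
stable odometer, so `T(∞,·,η) ≤ L` by the least action principle, while each of them is at
most `T(∞,·,η)` by the finite-volume one. -/
theorem eventually_odometerIn_box_eq_Tinf (hd : 1 ≤ d) (hP : P.Legal)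
    (hstable : ∀ y, P.finalConfig η y < 2 * d) (y : Site d) :
    ∀ᶠ n in atTop, ∀ z ∈ closedNbhd y, odometerIn η (box d n) z = P.Tinf η z := by
  let L : Site d → ℕ := fun z => ⨆ n, odometerIn η (box d n) z
  have hL : ∀ z, ∀ᶠ n in atTop, odometerIn η (box d n) z = L z := fun z =>
    eventually_eq_ciSup_of_monotone (fun _ _ h => odometerIn_mono hd (box_mono h) z)
      ⟨P.Tinf η z, by rintro _ ⟨n, rfl⟩; exact odometerIn_le_Tinf hstable _ z⟩
  have hLstable : ∀ x, heightAfter η L x < 2 * d := fun x => by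
    obtain ⟨n, hn, hx⟩ :=
      (((eventually_all_finset (closedNbhd x)).2 fun z _ => hL z).and (eventually_mem_box x)).exists
    rw [← heightAfter_congr η hn]
    exact heightAfter_odometerIn_lt hd hx
  have hLT : ∀ z, L z = P.Tinf η z := fun z => le_antisymm
    (ciSup_le fun n => odometerIn_le_Tinf hstable _ z)
    (csSup_le' <| by rintro _ ⟨t, rfl⟩; exact hP.T_le hLstable t z)
  exact (eventually_all_finset _).2 fun z _ => (hL z).mono fun n hn => hn.trans (hLT z)

theorem odometer_eq_Tinf (hd : 1 ≤ d) (hP : P.Legal) (hstable : ∀ y, P.finalConfig η y < 2 * d)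
    (x : Site d) : odometer η x = P.Tinf η x := by
  refine le_antisymm (iSup_le fun V => Nat.cast_le.2 (odometerIn_le_Tinf hstable V x)) ?_
  obtain ⟨n, hn⟩ := (eventually_odometerIn_box_eq_Tinf hd hP hstable x).exists
  rw [← hn x (mem_closedNbhd_self x)]
  exact odometerIn_le_odometer η _ x

end TopplingProcedure

end InfiniteVolume

section Conservation

def IsStabilization (η : Config d) (s : Site d → ℤ) : Prop :=
  ∃ P : TopplingProcedure d, P.Legal ∧ P.StabilizingFor η ∧ ∀ y, s y = P.finalConfig η y

variable {η : Config d} {s : Site d → ℤ}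

theorem IsStabilization.toNat_le (h : IsStabilization η s) (y : Site d) :
    (s y).toNat ≤ 2 * d - 1 := by
  obtain ⟨P, -, hstab, hs⟩ := h
  have := hstab.2 y
  rw [hs y]
  omega

theorem IsStabilization.odometer_lt_top (hd : 1 ≤ d) (h : IsStabilization η s) (x : Site d) :
    odometer η x < ⊤ := by
  obtain ⟨P, hP, hstab, -⟩ := h
  rw [TopplingProcedure.odometer_eq_Tinf hd hP hstab.finalConfig_lt]
  exact ENNReal.natCast_lt_top _

theorem IsStabilization.add_nbrSum_odometer (hd : 1 ≤ d) (h : IsStabilization η s) (y : Site d) :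
    (η y : ℝ≥0∞) + nbrSum (odometer η) y = ((s y).toNat : ℝ≥0∞) + 2 * d * odometer η y := by
  obtain ⟨P, hP, hstab, hs⟩ := h
  rw [hs y]
  have hodo : odometer η = fun x => (P.Tinf η x : ℝ≥0∞) :=
    funext (TopplingProcedure.odometer_eq_Tinf hd hP hstab.finalConfig_lt)
  have hcons : η y + nbrSum (P.Tinf η) y = (P.finalConfig η y).toNat + 2 * d * P.Tinf η y :=
    add_nbrSum_eq_toNat_heightAfter_add η (P.Tinf η) (hstab.2 y).1
  rw [hodo, show (fun x => (P.Tinf η x : ℝ≥0∞)) = Nat.castAddMonoidHom ℝ≥0∞ ∘ P.Tinf η from rfl,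
    ← map_nbrSum, Nat.coe_castAddMonoidHom, Function.comp_apply]
  exact_mod_cast hcons

theorem truncated_balance {a b : ℝ≥0∞} {u : Site d → ℝ≥0∞} {y : Site d}
    (h : a + nbrSum u y = b + 2 * d * u y) (M : ℝ≥0∞) :
    nbrSum (fun z => min (u z) M) y + (if u y < M then a else 0)
      ≤ 2 * d * min (u y) M + (if u y < M then b else 0) := by
  split_ifs with hy
  · rw [min_eq_left hy.le, add_comm, add_comm _ b, ← h]
    exact add_le_add_right (nbrSum_le_nbrSum fun z _ => min_le_left _ _) a
  · calc nbrSum (fun z => min (u z) M) y + 0 ≤ nbrSum (fun _ => M) y :=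
          (add_zero _).le.trans (nbrSum_le_nbrSum fun z _ => min_le_right _ _)
      _ = 2 * d * min (u y) M + 0 := by rw [nbrSum_const, min_eq_right (not_lt.1 hy), add_zero]

end Conservation

section LowerBound

variable {μ : Measure (Config d)}

theorem lintegral_eq_of_covariant (hinv : TransInvariant μ) {g : Config d → Site d → ℝ≥0∞}
    (hg : ∀ z, Measurable fun η => g η z) (hcov : ∀ v η x, g (shiftConfig v η) x = g η (x + v))
    (y z : Site d) : ∫⁻ η, g η z ∂μ = ∫⁻ η, g η y ∂μ := by
  rw [← lintegral_comp_shiftConfig hinv (z - y) (hg y)]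
  simp [hcov]

theorem lintegral_nbrSum_of_covariant (hinv : TransInvariant μ) {g : Config d → Site d → ℝ≥0∞}
    (hg : ∀ z, Measurable fun η => g η z) (hcov : ∀ v η x, g (shiftConfig v η) x = g η (x + v))
    (y : Site d) : ∫⁻ η, nbrSum (g η) y ∂μ = 2 * d * ∫⁻ η, g η y ∂μ := by
  calc ∫⁻ η, nbrSum (g η) y ∂μ = nbrSum (fun z => ∫⁻ η, g η z ∂μ) y := by
        simp only [nbrSum]
        rw [lintegral_finsetSum]
        · simp only [lintegral_add_left (hg _)]
        · exact fun i _ => (hg _).add (hg _)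
    _ = nbrSum (fun _ => ∫⁻ η, g η y ∂μ) y :=
        nbrSum_congr fun z _ => lintegral_eq_of_covariant hinv hg hcov y z
    _ = 2 * d * ∫⁻ η, g η y ∂μ := nbrSum_const _ y

theorem measurable_natCast_apply (x : Site d) : Measurable fun η : Config d => (η x : ℝ≥0∞) :=
  measurable_from_top.comp (measurable_pi_apply x)

theorem lintegral_ite_odometer_lt_le [IsProbabilityMeasure μ] (hd : 1 ≤ d)
    (hinv : TransInvariant μ) {S : Config d → Site d → ℤ}
    (hS : ∀ᵐ η ∂μ, IsStabilization η (S η)) (M : ℕ) :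
    ∫⁻ η, (if odometer η 0 < M then (η 0 : ℝ≥0∞) else 0) ∂μ
      ≤ ∫⁻ η, ((S η 0).toNat : ℝ≥0∞) ∂μ := by
  have hmin : ∀ z : Site d, Measurable fun η => min (odometer η z) M := fun z =>
    (measurable_odometer z).min measurable_const
  set c := ∫⁻ η, min (odometer η 0) M ∂μ
  have hc : 2 * d * c ≠ ⊤ := ENNReal.mul_ne_top (ENNReal.mul_ne_top ENNReal.ofNat_ne_top
    (ENNReal.natCast_ne_top d)) <| ne_top_of_le_ne_top
    (ENNReal.natCast_ne_top M) ((lintegral_mono fun η => min_le_right _ _).trans (by simp))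
  have hbal := lintegral_mono_ae (μ := μ) <| hS.mono fun η hη =>
    truncated_balance (hη.add_nbrSum_odometer hd 0) M
  rw [lintegral_add_left (measurable_nbrSum hmin 0),
    lintegral_nbrSum_of_covariant hinv hmin (fun v η x => by rw [odometer_shiftConfig]),
    lintegral_add_left ((hmin 0).const_mul _), lintegral_const_mul _ (hmin 0),
    ENNReal.add_le_add_iff_left hc] at hbal
  exact hbal.trans (lintegral_mono fun η => by split_ifs <;> simp)

theorem lintegral_le_lintegral_stabilization [IsProbabilityMeasure μ] (hd : 1 ≤ d)
    (hinv : TransInvariant μ) {S : Config d → Site d → ℤ}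
    (hS : ∀ᵐ η ∂μ, IsStabilization η (S η)) :
    ∫⁻ η, (η 0 : ℝ≥0∞) ∂μ ≤ ∫⁻ η, ((S η 0).toNat : ℝ≥0∞) ∂μ := by
  have hsup : ∀ᵐ η ∂μ, ⨆ M : ℕ, (if odometer η 0 < M then (η 0 : ℝ≥0∞) else 0) = η 0 :=
    hS.mono fun η hη => le_antisymm (iSup_le fun M => by split_ifs <;> simp) <| by
      obtain ⟨M, hM⟩ := ENNReal.exists_nat_gt (hη.odometer_lt_top hd 0).ne
      exact le_iSup_of_le M (by rw [if_pos hM])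
  rw [← lintegral_congr_ae hsup, lintegral_iSup]
  · exact iSup_le (lintegral_ite_odometer_lt_le hd hinv hS)
  · exact fun M => Measurable.ite (measurableSet_lt (measurable_odometer 0) measurable_const)
      (measurable_natCast_apply 0) measurable_const
  · intro M M' h η
    dsimp only
    split_ifs with h₁ h₂ h₂
    · exact le_rfl
    · exact absurd (h₁.trans_le (Nat.cast_le.2 h)) h₂
    · exact bot_le
    · exact le_rfl

end LowerBound

section UpperBound

/-- The boxes `[-m, m]^d` and `[-(m + k), m + k]^d` have asymptotically equal volumes. -/
theorem le_add_of_forall_pow_mul_le {a r e : ℝ≥0∞} (ha : a ≠ ⊤) (hr : r ≠ ⊤) (he : e ≠ ⊤)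
    (d k : ℕ) (h : ∀ m : ℕ, (((2 * m + 1) ^ d : ℕ) : ℝ≥0∞) * a
      ≤ ((2 * (m + k) + 1) ^ d : ℕ) * r + ((2 * m + 1) ^ d : ℕ) * e) :
    a ≤ r + e := by
  rw [← ENNReal.toReal_le_toReal ha (by finiteness), ENNReal.toReal_add hr he]
  let θ : ℕ → ℝ := fun m => (2 * m + 1 : ℝ) / (2 * (m + k) + 1)
  have hθ : Tendsto θ atTop (𝓝 1) := by
    refine ((tendsto_natCast_div_add_atTop (2 * k : ℝ)).comp
      (tendsto_atTop_mono (fun m => (by omega : m ≤ 2 * m + 1)) tendsto_id)).congr fun m => ?_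
    simp only [θ, Function.comp_apply, Nat.cast_add, Nat.cast_mul, Nat.cast_ofNat, Nat.cast_one]
    ring_nf
  refine le_of_tendsto_of_tendsto' (by simpa using (hθ.pow d).mul_const a.toReal)
    (by simpa using ((hθ.pow d).mul_const e.toReal).const_add r.toReal) fun m => ?_
  have hm := ENNReal.toReal_mono (by finiteness) (h m)
  rw [ENNReal.toReal_add (by finiteness) (by finiteness)] at hm
  simp only [ENNReal.toReal_mul, ENNReal.toReal_natCast] at hm
  push_cast at hm
  have hq : (0 : ℝ) < (2 * (m + k) + 1) ^ d := by positivity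
  simp only [θ, div_pow]
  rw [div_mul_eq_mul_div, div_mul_eq_mul_div, div_le_iff₀ hq, add_mul, div_mul_cancel₀ _ hq.ne']
  linarith

def Settled (k : ℕ) (η : Config d) : Prop :=
  ∀ z ∈ closedNbhd 0, (odometerIn η (box d k) z : ℝ≥0∞) = odometer η z

theorem measurableSet_settled (k : ℕ) : MeasurableSet {η : Config d | Settled k η} := by
  simp only [Settled, Set.ofPred_forall]
  exact MeasurableSet.iInter fun z => MeasurableSet.iInter fun _ => measurableSet_eq_fun
    (measurable_from_top.comp (measurable_odometerIn _ z)) (measurable_odometer z)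

theorem Settled.mono (hd : 1 ≤ d) {k k' : ℕ} {η : Config d} (h : Settled k η) (hk : k ≤ k') :
    Settled k' η := fun z hz => le_antisymm (odometerIn_le_odometer η _ z) <|
  (h z hz).symm.le.trans (Nat.cast_le.2 (odometerIn_mono hd (box_mono hk) z))

theorem IsStabilization.eventually_settled (hd : 1 ≤ d) {η : Config d} {s : Site d → ℤ}
    (h : IsStabilization η s) : ∀ᶠ k in atTop, Settled k η := by
  obtain ⟨P, hP, hstab, -⟩ := h
  filter_upwards [TopplingProcedure.eventually_odometerIn_box_eq_Tinf hd hP hstab.finalConfig_lt 0]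
    with k hk z hz
  rw [hk z hz, TopplingProcedure.odometer_eq_Tinf hd hP hstab.finalConfig_lt]

/-- The odometer of `W` is squeezed between the settled one of the box and the infinite one. -/
theorem IsStabilization.toNat_eq_stabilizedIn (hd : 1 ≤ d) {η : Config d} {s : Site d → ℤ}
    (h : IsStabilization η s) {k : ℕ} (hk : Settled k η) {W : Finset (Site d)}
    (hW : box d k ⊆ W) : (s 0).toNat = stabilizedIn η W 0 := by
  obtain ⟨P, hP, hstab, hs⟩ := h
  have hW : ∀ z ∈ closedNbhd 0, odometerIn η W z = P.Tinf η z := fun z hz => by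
    have hkz := hk z hz
    rw [TopplingProcedure.odometer_eq_Tinf hd hP hstab.finalConfig_lt, Nat.cast_inj] at hkz
    exact le_antisymm (TopplingProcedure.odometerIn_le_Tinf hstab.finalConfig_lt W z)
      (hkz ▸ odometerIn_mono hd hW z)
  rw [hs, stabilizedIn, heightAfter_congr η hW]
  rfl

end UpperBound

section Averaging

variable {μ : Measure (Config d)} {S : Config d → Site d → ℤ}

theorem shiftRegion_shiftRegion_neg (y : Site d) (V : Finset (Site d)) :
    shiftRegion y (shiftRegion (-y) V) = V := by
  ext x
  simp [mem_shiftRegion]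

theorem lintegral_stabilization_le_add [IsProbabilityMeasure μ] (hd : 1 ≤ d)
    (hinv : TransInvariant μ) (hS : ∀ᵐ η ∂μ, IsStabilization η (S η)) {k m : ℕ} {y : Site d}
    (hy : y ∈ box d m) :
    ∫⁻ η, ((S η 0).toNat : ℝ≥0∞) ∂μ ≤ ∫⁻ η, (stabilizedIn η (box d (m + k)) y : ℝ≥0∞) ∂μ
      + (2 * d - 1 : ℕ) * μ {η | Settled k η}ᶜ := by
  have hstab : Measurable fun η => (stabilizedIn η (shiftRegion (-y) (box d (m + k))) 0 : ℝ≥0∞) :=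
    measurable_from_top.comp (measurable_stabilizedIn _ 0)
  have hshift : ∫⁻ η, (stabilizedIn η (box d (m + k)) y : ℝ≥0∞) ∂μ
      = ∫⁻ η, (stabilizedIn η (shiftRegion (-y) (box d (m + k))) 0 : ℝ≥0∞) ∂μ := by
    rw [← lintegral_comp_shiftConfig hinv y hstab]
    simp [stabilizedIn_shiftConfig, shiftRegion_shiftRegion_neg]
  rw [hshift, ← lintegral_indicator_const (measurableSet_settled k).compl,
    ← lintegral_add_left hstab]
  refine lintegral_mono_ae (hS.mono fun η hη => ?_)
  by_cases hk : Settled k η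
  · rw [hη.toNat_eq_stabilizedIn hd hk (shiftRegion_neg_box_subset hy)]
    exact le_self_add
  · rw [Set.indicator_of_mem (show η ∈ {η | Settled k η}ᶜ from hk)]
    exact le_add_left (Nat.cast_le.2 (hη.toNat_le 0))

theorem card_box_mul_lintegral_stabilization_le [IsProbabilityMeasure μ] (hd : 1 ≤ d)
    (hinv : TransInvariant μ) (hS : ∀ᵐ η ∂μ, IsStabilization η (S η)) (k m : ℕ) :
    ((box d m).card : ℝ≥0∞) * ∫⁻ η, ((S η 0).toNat : ℝ≥0∞) ∂μ
      ≤ (box d (m + k)).card * ∫⁻ η, (η 0 : ℝ≥0∞) ∂μ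
        + (box d m).card * ((2 * d - 1 : ℕ) * μ {η | Settled k η}ᶜ) := by
  have hmass : ∑ y ∈ box d (m + k), ∫⁻ η, (stabilizedIn η (box d (m + k)) y : ℝ≥0∞) ∂μ
      ≤ (box d (m + k)).card * ∫⁻ η, (η 0 : ℝ≥0∞) ∂μ := by
    have hmeas : ∀ y, Measurable fun η => (stabilizedIn η (box d (m + k)) y : ℝ≥0∞) := fun y =>
      measurable_from_top.comp (measurable_stabilizedIn _ y)
    rw [← lintegral_finsetSum _ fun y _ => hmeas y]
    calc ∫⁻ η, ∑ y ∈ box d (m + k), (stabilizedIn η (box d (m + k)) y : ℝ≥0∞) ∂μ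
        ≤ ∫⁻ η, ∑ y ∈ box d (m + k), (η y : ℝ≥0∞) ∂μ := lintegral_mono fun η => by
          rw [← Nat.cast_sum, ← Nat.cast_sum]
          exact Nat.cast_le.2 (sum_stabilizedIn_le hd η _)
      _ = (box d (m + k)).card * ∫⁻ η, (η 0 : ℝ≥0∞) ∂μ := by
          rw [lintegral_finsetSum _ fun y _ => measurable_natCast_apply y]
          simp [lintegral_eq_of_covariant (g := fun η x => (η x : ℝ≥0∞)) hinv
            measurable_natCast_apply (fun v η x => rfl) 0]
  calc ((box d m).card : ℝ≥0∞) * ∫⁻ η, ((S η 0).toNat : ℝ≥0∞) ∂μ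
      ≤ ∑ y ∈ box d m, (∫⁻ η, (stabilizedIn η (box d (m + k)) y : ℝ≥0∞) ∂μ
          + (2 * d - 1 : ℕ) * μ {η | Settled k η}ᶜ) := by
        rw [← nsmul_eq_mul, ← Finset.sum_const]
        exact Finset.sum_le_sum fun y hy => lintegral_stabilization_le_add hd hinv hS hy
    _ ≤ _ := by
        rw [Finset.sum_add_distrib, Finset.sum_const, nsmul_eq_mul]
        gcongr
        exact (Finset.sum_le_sum_of_subset (box_mono (Nat.le_add_right m k))).trans hmass

end Averaging

section Conclusion

variable {μ : Measure (Config d)} {S : Config d → Site d → ℤ}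

theorem lintegral_stabilization_le_const [IsProbabilityMeasure μ]
    (hS : ∀ᵐ η ∂μ, IsStabilization η (S η)) :
    ∫⁻ η, ((S η 0).toNat : ℝ≥0∞) ∂μ ≤ (2 * d - 1 : ℕ) :=
  (lintegral_mono_ae (hS.mono fun η hη => Nat.cast_le.2 (hη.toNat_le 0))).trans (by simp)

theorem tendsto_measure_not_settled (hd : 1 ≤ d) [IsProbabilityMeasure μ]
    (hS : ∀ᵐ η ∂μ, IsStabilization η (S η)) :
    Tendsto (fun k => μ {η | Settled k η}ᶜ) atTop (𝓝 0) := by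
  have hnull : μ (⋂ k, {η | Settled k η}ᶜ) = 0 := by
    refine measure_mono_null (fun η hη => ?_) (ae_iff.1 hS)
    intro hstab
    obtain ⟨k, hk⟩ := (IsStabilization.eventually_settled hd hstab).exists
    exact Set.mem_iInter.1 hη k hk
  rw [← hnull]
  exact tendsto_measure_iInter_atTop (fun k => (measurableSet_settled k).compl.nullMeasurableSet)
    (fun _ _ h _ hη hk => hη (hk.mono hd h)) ⟨0, measure_ne_top _ _⟩

theorem lintegral_stabilization_le [IsProbabilityMeasure μ] (hd : 1 ≤ d)
    (hinv : TransInvariant μ) (hS : ∀ᵐ η ∂μ, IsStabilization η (S η)) :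
    ∫⁻ η, ((S η 0).toNat : ℝ≥0∞) ∂μ ≤ ∫⁻ η, (η 0 : ℝ≥0∞) ∂μ := by
  set A := ∫⁻ η, ((S η 0).toNat : ℝ≥0∞) ∂μ
  set ρ := ∫⁻ η, (η 0 : ℝ≥0∞) ∂μ
  rcases eq_or_ne ρ ⊤ with hρ | hρ
  · exact hρ ▸ le_top
  let ε : ℕ → ℝ≥0∞ := fun k => (2 * d - 1 : ℕ) * μ {η | Settled k η}ᶜ
  have hA : A ≠ ⊤ := ne_top_of_le_ne_top (ENNReal.natCast_ne_top _)
    (lintegral_stabilization_le_const hS)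
  have hε : ∀ k, ε k ≠ ⊤ := fun k => by finiteness
  have hbound : ∀ k, A ≤ ρ + ε k := fun k =>
    le_add_of_forall_pow_mul_le hA hρ (hε k) d k fun m => by
      simpa only [card_box] using card_box_mul_lintegral_stabilization_le hd hinv hS k m
  have hε0 : Tendsto ε atTop (𝓝 0) := by
    have := ENNReal.Tendsto.const_mul (tendsto_measure_not_settled hd hS)
      (Or.inr (ENNReal.natCast_ne_top (2 * d - 1)))
    rwa [mul_zero] at this
  exact ge_of_tendsto' (by simpa using hε0.const_add ρ) hbound

end Conclusion

end Sandpile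

theorem statement4_general (d : ℕ) (hd : 1 ≤ d) (μ : Measure (Config d))
    [IsProbabilityMeasure μ] (hinv : TransInvariant μ) (ρ : ℝ≥0∞)
    (hmean : ∫⁻ η, ((η (0 : Site d) : ℝ≥0∞)) ∂μ = ρ)
    (S : Config d → Site d → ℤ)
    (hS : ∀ᵐ η ∂μ, ∃ P : TopplingProcedure d, P.Legal ∧ P.StabilizingFor η ∧
        ∀ y, S η y = P.finalConfig η y) :
    ∫⁻ η, (((S η (0 : Site d)).toNat : ℝ≥0∞)) ∂μ = ρ :=
  hmean ▸ le_antisymm (lintegral_stabilization_le hd hinv hS)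
    (lintegral_le_lintegral_stabilization hd hinv hS)

/-- Lemma 2.10 (first part): if `μ` is a translation invariant probability measure
with finite density `ρ = E_μ[η(0)]` and `μ` is stabilizable, then the expected height
is conserved by stabilization: `E_μ[η_∞(0)] = ρ`. -/
theorem statement4 (d : ℕ) (hd : 1 ≤ d) (μ : Measure (Config d))
    [IsProbabilityMeasure μ] (hinv : TransInvariant μ) (ρ : ℝ≥0∞) (hρ : ρ < ⊤)
    (hmean : ∫⁻ η, ((η (0 : Site d) : ℝ≥0∞)) ∂μ = ρ)
    (hstab : ∀ᵐ η ∂μ, Stabilizable η)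
    (S : Config d → Site d → ℤ)
    (hS : ∀ᵐ η ∂μ, ∃ P : TopplingProcedure d, P.Legal ∧ P.StabilizingFor η ∧
        ∀ y, S η y = P.finalConfig η y) :
    ∫⁻ η, (((S η (0 : Site d)).toNat : ℝ≥0∞)) ∂μ = ρ :=
  statement4_general d hd μ hinv ρ hmean S hS
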